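/- arXiv:1201.5965 — 5 statements merged into one kernel-verified Lean document; each statement's English description precedes it below -/
import Mathlib

section
/- A positive integer n is a triangle lattice number if and only if every prime factor of n congruent to 2 modulo 3 occurs to an even power in the prime factorization of n. -/
lemma loeschian_mul {a b : ℤ} (ha : ∃ x y : ℤ, a = x^2 + x*y + y^2)
    (hb : ∃ x y : ℤ, b = x^2 + x*y + y^2) :
    ∃ x y : ℤ, a * b = x^2 + x*y + y^2 := by
  obtain ⟨x, y, rfl⟩ := ha; obtain ⟨u, v, rfl⟩ := hb
  exact ⟨x*u - y*v, x*v + y*u + y*v, by ring⟩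

lemma cube_root_sum {K : Type*} [Field K] {ζ : K} (h3 : ζ^3 = 1) (h1 : ζ ≠ 1) :
    ζ^2 + ζ + 1 = 0 := by
  have h : (ζ - 1) * (ζ^2 + ζ + 1) = 0 := by linear_combination h3
  rcases mul_eq_zero.mp h with h | h
  · exact absurd (sub_eq_zero.mp h) h1
  · exact h

lemma sq_eq_neg_three_of_mod_three {p : ℕ} [hpf : Fact p.Prime] (hp : p % 3 = 1) :
    ∃ c : ZMod p, c^2 = -3 := by
  have h3 : (3 : ℕ) ∣ Fintype.card (ZMod p)ˣ := by
    rw [ZMod.card_units_eq_totient, Nat.totient_prime hpf.out]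
    omega
  obtain ⟨u, hu⟩ := exists_prime_orderOf_dvd_card 3 h3
  have hu3 : u ^ 3 = 1 := by rw [← hu]; exact pow_orderOf_eq_one u
  have hu1 : u ≠ 1 := by
    intro h; rw [h, orderOf_one] at hu; omega
  set ζ : ZMod p := ((u : (ZMod p)ˣ) : ZMod p) with hζ
  have hζ3 : ζ ^ 3 = 1 := by
    rw [hζ, ← Units.val_pow_eq_pow_val, hu3, Units.val_one]
  have hζ1 : ζ ≠ 1 := fun h => hu1 (Units.ext h)
  have key := cube_root_sum hζ3 hζ1
  exact ⟨2*ζ + 1, by linear_combination (4:ZMod p) * key⟩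

lemma not_sq_eq_neg_three {p : ℕ} [hpf : Fact p.Prime] (hp : p % 3 = 2) (hp2 : p ≠ 2) :
    ¬ ∃ c : ZMod p, c^2 = -3 := by
  rintro ⟨c, hc⟩
  have hodd : (2 : ZMod p) ≠ 0 := by
    intro h
    have h2 : ((2 : ℕ) : ZMod p) = 0 := by exact_mod_cast h
    rw [ZMod.natCast_eq_zero_iff] at h2
    exact hp2 ((Nat.prime_dvd_prime_iff_eq hpf.out Nat.prime_two).mp h2)
  set ζ : ZMod p := (c - 1) / 2 with hζ
  have h2 : ζ * 2 = c - 1 := div_mul_cancel₀ _ hodd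
  have hsum : ζ^2 + ζ + 1 = 0 := by
    have h4 : (4 : ZMod p) * (ζ^2 + ζ + 1) = 0 := by
      linear_combination (ζ*2 + c + 1) * h2 + hc
    have h4ne : (4 : ZMod p) ≠ 0 := by
      have : (4 : ZMod p) = 2 * 2 := by norm_num
      rw [this]; exact mul_ne_zero hodd hodd
    exact (mul_eq_zero.mp h4).resolve_left h4ne
  have hζ3 : ζ ^ 3 = 1 := by linear_combination (ζ - 1) * hsum
  have hζ1 : ζ ≠ 1 := by
    intro h
    rw [h] at hsum
    have h3 : ((3 : ℕ) : ZMod p) = 0 := by push_cast; linear_combination hsum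
    rw [ZMod.natCast_eq_zero_iff] at h3
    have := (Nat.prime_dvd_prime_iff_eq hpf.out Nat.prime_three).mp h3
    omega
  have hζ0 : ζ ≠ 0 := by intro h; rw [h] at hζ3; simp at hζ3
  set u : (ZMod p)ˣ := Units.mk0 ζ hζ0 with hu
  have hu3 : u ^ 3 = 1 := by ext; push_cast [hu]; exact hζ3
  have hord : orderOf u = 3 := by
    have hdvd := orderOf_dvd_of_pow_eq_one hu3
    rcases (Nat.prime_three).eq_one_or_self_of_dvd _ hdvd with h | h
    · exfalso
      have : u = 1 := orderOf_eq_one_iff.mp h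
      apply hζ1
      have := congrArg (Units.val) this
      simpa [hu] using this
    · exact h
  have hcard : orderOf u ∣ Fintype.card (ZMod p)ˣ := orderOf_dvd_card
  rw [hord, ZMod.card_units_eq_totient, Nat.totient_prime hpf.out] at hcard
  omega

lemma thue {p : ℕ} [Fact p.Prime] (c : ZMod p) :
    ∃ x y : ℤ, x.natAbs ≤ p.sqrt ∧ y.natAbs ≤ p.sqrt ∧ ¬(x = 0 ∧ y = 0) ∧
      (x : ZMod p) = c * (y : ZMod p) := by
  have hcard : Fintype.card (ZMod p) < Fintype.card (Fin (p.sqrt + 1) × Fin (p.sqrt + 1)) := by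
    rw [ZMod.card, Fintype.card_prod, Fintype.card_fin]
    have := Nat.lt_succ_sqrt' p
    nlinarith
  obtain ⟨⟨a₁, b₁⟩, ⟨a₂, b₂⟩, hne, heq⟩ :=
    Fintype.exists_ne_map_eq_of_card_lt (fun ab : Fin (p.sqrt+1) × Fin (p.sqrt+1) =>
      ((ab.1.val : ZMod p)) - c * (ab.2.val : ZMod p)) hcard
  simp only at heq
  refine ⟨(a₁.val : ℤ) - a₂.val, (b₁.val : ℤ) - b₂.val, ?_, ?_, ?_, ?_⟩
  · have h1 := a₁.is_lt; have h2 := a₂.is_lt; omega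
  · have h1 := b₁.is_lt; have h2 := b₂.is_lt; omega
  · rintro ⟨hx, hy⟩
    apply hne
    have hx' : a₁.val = a₂.val := by omega
    have hy' : b₁.val = b₂.val := by omega
    exact Prod.ext (Fin.ext hx') (Fin.ext hy')
  · push_cast
    linear_combination heq

lemma prime_eq_sq_add_three_sq {p : ℕ} [hpf : Fact p.Prime] (hp : p % 3 = 1) :
    ∃ u v : ℤ, (p : ℤ) = u^2 + 3*v^2 := by
  have hp5 : 5 ≤ p := by
    by_contra h
    push_neg at h
    have h2 := hpf.out.two_le
    have h4 : p = 4 := by omega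
    have := hpf.out
    rw [h4] at this
    exact absurd this (by decide)
  have hsqlt : (p.sqrt : ℤ)^2 < (p : ℤ) := by
    have h1 : p.sqrt * p.sqrt ≤ p := by
      have := Nat.sqrt_le' p
      nlinarith [this]
    have h2 : p.sqrt * p.sqrt ≠ p := by
      intro h
      have hd : p.sqrt ∣ p := Dvd.intro _ h
      rcases (Nat.Prime.eq_one_or_self_of_dvd hpf.out _ hd) with h' | h' <;>
        rw [h'] at h <;> nlinarith
    have : p.sqrt * p.sqrt < p := lt_of_le_of_ne h1 h2
    push_cast [pow_two]
    exact_mod_cast this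
  obtain ⟨c, hc⟩ := sq_eq_neg_three_of_mod_three hp
  obtain ⟨x, y, hx, hy, hne, hcong⟩ := thue c
  set N : ℤ := x^2 + 3*y^2 with hN
  have hpd : (p : ℤ) ∣ N := by
    have : ((N : ℤ) : ZMod p) = 0 := by
      push_cast [hN]
      rw [hcong]
      linear_combination (y:ZMod p)^2 * hc
    exact (ZMod.intCast_zmod_eq_zero_iff_dvd _ p).mp this
  have hx2 : x^2 < (p:ℤ) := by
    calc x^2 = (x.natAbs : ℤ)^2 := by rw [← Int.natAbs_sq]
    _ ≤ (p.sqrt : ℤ)^2 := by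
        have : (x.natAbs : ℤ) ≤ (p.sqrt : ℤ) := by exact_mod_cast hx
        nlinarith [Int.natCast_nonneg x.natAbs]
    _ < p := hsqlt
  have hy2 : y^2 < (p:ℤ) := by
    calc y^2 = (y.natAbs : ℤ)^2 := by rw [← Int.natAbs_sq]
    _ ≤ (p.sqrt : ℤ)^2 := by
        have : (y.natAbs : ℤ) ≤ (p.sqrt : ℤ) := by exact_mod_cast hy
        nlinarith [Int.natCast_nonneg y.natAbs]
    _ < p := hsqlt
  have hN0 : 0 < N := by
    rcases lt_or_eq_of_le (show (0:ℤ) ≤ N by positivity) with h | h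
    · exact h
    · exfalso
      apply hne
      constructor <;> nlinarith [sq_nonneg x, sq_nonneg y]
  have hNlt : N < 4 * p := by nlinarith
  obtain ⟨k, hk⟩ := hpd
  have hk0 : 0 < k := by nlinarith [hpf.out.pos]
  have hk4 : k < 4 := by
    by_contra h
    push_neg at h
    have : (p:ℤ) * 4 ≤ (p:ℤ) * k := by
      apply mul_le_mul_of_nonneg_left h (by positivity)
    omega
  interval_cases k
  · exact ⟨x, y, by linarith [hk]⟩
  · -- N = 2p impossible mod 4
    exfalso
    have hodd : p % 2 = 1 := Nat.Prime.eq_two_or_odd hpf.out |>.resolve_left (by omega)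
    have h4 : ((x : ZMod 4))^2 + 3*((y : ZMod 4))^2 = 2 * ((p : ZMod 4)) := by
      have := congrArg (fun t : ℤ => (t : ZMod 4)) hk
      push_cast [hN] at this
      linear_combination this
    have hp4 : ((p : ZMod 4)) = ((p % 4 : ℕ) : ZMod 4) := (ZMod.natCast_mod p 4).symm
    have hpm : p % 4 = 1 ∨ p % 4 = 3 := by omega
    have key : ∀ a b : ZMod 4, a^2 + 3*b^2 ≠ 2 := by decide
    rcases hpm with h | h <;> rw [hp4, h] at h4 <;>
      [exact key _ _ (by rw [h4]; decide); exact key _ _ (by rw [h4]; decide)]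
  · -- N = 3p : descend
    have h3x : (3:ℤ) ∣ x := by
      have h3 : Prime (3:ℤ) := Int.prime_three
      apply h3.dvd_of_dvd_pow (n := 2)
      exact ⟨(p:ℤ) - y^2, by linarith [hk]⟩
    obtain ⟨z, rfl⟩ := h3x
    exact ⟨y, z, by nlinarith [hk]⟩

lemma prime_loeschian {p : ℕ} (hp : p.Prime) (h : p % 3 ≠ 2) :
    ∃ a b : ℤ, (p:ℤ) = a^2 + a*b + b^2 := by
  haveI : Fact p.Prime := ⟨hp⟩
  rcases Nat.lt_or_ge (p % 3) 2 with h3 | h3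
  · interval_cases h' : p % 3
    · -- 3 ∣ p so p = 3
      have h3p : (3:ℕ) ∣ p := Nat.dvd_of_mod_eq_zero h'
      have : p = 3 := ((Nat.prime_dvd_prime_iff_eq Nat.prime_three hp).mp h3p).symm
      exact ⟨1, 1, by rw [this]; norm_num⟩
    · obtain ⟨u, v, huv⟩ := prime_eq_sq_add_three_sq h'
      exact ⟨u - v, 2*v, by rw [huv]; ring⟩
  · exfalso; have := Nat.mod_lt p (show 0 < 3 by norm_num); omega

lemma zmod_two_key : ∀ A B : ZMod 2, A^2 + A*B + B^2 = 0 → A = 0 ∧ B = 0 := by decide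

lemma dvd_of_dvd_loeschian {p : ℕ} (hp : p.Prime) (h2 : p % 3 = 2) {a b : ℤ}
    (hdvd : (p:ℤ) ∣ a^2 + a*b + b^2) : (p:ℤ) ∣ a ∧ (p:ℤ) ∣ b := by
  haveI : Fact p.Prime := ⟨hp⟩
  have h0 : (a : ZMod p)^2 + (a : ZMod p)*(b : ZMod p) + (b : ZMod p)^2 = 0 := by
    have := (ZMod.intCast_zmod_eq_zero_iff_dvd _ p).mpr hdvd
    push_cast at this
    linear_combination this
  rw [← ZMod.intCast_zmod_eq_zero_iff_dvd, ← ZMod.intCast_zmod_eq_zero_iff_dvd]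
  by_cases hp2 : p = 2
  · subst hp2
    exact zmod_two_key _ _ h0
  · have hbz : (b : ZMod p) = 0 := by
      by_contra hb
      apply not_sq_eq_neg_three h2 hp2
      refine ⟨(2*(a:ZMod p) + b) * (b : ZMod p)⁻¹, ?_⟩
      rw [mul_pow]
      rw [inv_pow, ← div_eq_mul_inv, div_eq_iff (pow_ne_zero 2 hb)]
      linear_combination (4 : ZMod p) * h0
    have haz : (a : ZMod p) = 0 := by
      have : (a : ZMod p)^2 = 0 := by rw [hbz] at h0; linear_combination h0
      exact pow_eq_zero_iff two_ne_zero |>.mp this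
    exact ⟨haz, hbz⟩

lemma even_factorization_of_loeschian : ∀ n : ℕ, 0 < n → ∀ a b : ℤ,
    (n:ℤ) = a^2 + a*b + b^2 →
    ∀ p : ℕ, p.Prime → p % 3 = 2 → Even (n.factorization p) := by
  intro n
  induction n using Nat.strong_induction_on with
  | _ n ih =>
    intro hn a b hab p hp h2
    by_cases hpn : p ∣ n
    · have hdvd : (p:ℤ) ∣ a^2 + a*b + b^2 := by
        rw [← hab]; exact_mod_cast Int.natCast_dvd_natCast.mpr hpn
      obtain ⟨ha, hb⟩ := dvd_of_dvd_loeschian hp h2 hdvd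
      obtain ⟨a', rfl⟩ := ha
      obtain ⟨b', rfl⟩ := hb
      set M : ℤ := a'^2 + a'*b' + b'^2 with hM
      have habM : (n:ℤ) = (p:ℤ)^2 * M := by rw [hab, hM]; ring
      have hM0 : 0 < M := by
        have hp0 : (0:ℤ) < (p:ℤ)^2 := by have := hp.pos; positivity
        have hnZ : (0:ℤ) < (n:ℤ) := by exact_mod_cast hn
        by_contra h
        push_neg at h
        have := mul_nonpos_of_nonneg_of_nonpos hp0.le h
        linarith
      set m : ℕ := M.toNat with hm
      have hmM : (m : ℤ) = M := Int.toNat_of_nonneg hM0.le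
      have hnm : n = p^2 * m := by
        have : (n:ℤ) = ((p^2 * m : ℕ) : ℤ) := by push_cast [hmM]; linarith [habM]
        exact_mod_cast this
      have hm0 : 0 < m := by
        by_contra h
        push_neg at h
        interval_cases m
        · simp [hnm] at hn
      have hmlt : m < n := by
        rw [hnm]
        have hp2 := hp.two_le
        exact lt_mul_of_one_lt_left hm0 (by nlinarith)
      have hrec := ih m hmlt hm0 a' b' (by rw [hmM, hM]) p hp h2
      have hfac : n.factorization p = 2 + m.factorization p := by
        rw [hnm, Nat.factorization_mul (pow_ne_zero 2 hp.pos.ne') hm0.ne',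
          hp.factorization_pow]
        simp
      rw [hfac]
      obtain ⟨k, hk⟩ := hrec
      exact ⟨k + 1, by omega⟩
    · rw [Nat.factorization_eq_zero_of_not_dvd hpn]
      exact Even.zero

lemma loeschian_of_even : ∀ n : ℕ, 0 < n →
    (∀ p : ℕ, p.Prime → p % 3 = 2 → Even (n.factorization p)) →
    ∃ a b : ℤ, (n:ℤ) = a^2 + a*b + b^2 := by
  intro n
  induction n using Nat.strong_induction_on with
  | _ n ih =>
    intro hn H
    rcases eq_or_ne n 1 with rfl | hn1
    · exact ⟨1, 0, by norm_num⟩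
    obtain ⟨p, hp, hpn⟩ := Nat.exists_prime_and_dvd hn1
    by_cases h2 : p % 3 = 2
    · have he := H p hp h2
      have h1le : 1 ≤ n.factorization p :=
        (hp.dvd_iff_one_le_factorization hn.ne').mp hpn
      have h2le : 2 ≤ n.factorization p := by
        rcases he with ⟨k, hk⟩; omega
      have hp2 : p^2 ∣ n := (hp.pow_dvd_iff_le_factorization hn.ne').mpr h2le
      obtain ⟨m, rfl⟩ := hp2
      have hm0 : 0 < m := by
        rcases Nat.eq_zero_or_pos m with rfl | h
        · simp at hn
        · exact h
      have hmlt : m < p^2 * m := by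
        have hp2 := hp.two_le
        exact lt_mul_of_one_lt_left hm0 (by nlinarith)
      have Hm : ∀ q : ℕ, q.Prime → q % 3 = 2 → Even (m.factorization q) := by
        intro q hq hq2
        have hfac : (p^2*m).factorization q = (p^2).factorization q + m.factorization q := by
          rw [Nat.factorization_mul (pow_ne_zero 2 hp.pos.ne') hm0.ne']
          simp
        have := H q hq hq2
        rw [hfac, hp.factorization_pow] at this
        rcases eq_or_ne q p with rfl | hqp
        · rw [Finsupp.single_eq_same] at this
          obtain ⟨k, hk⟩ := this
          exact ⟨k - 1, by omega⟩
        · simpa [Finsupp.single_apply, hqp.symm] using this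
      obtain ⟨a, b, hab⟩ := ih m hmlt hm0 Hm
      refine ⟨p*a, p*b, ?_⟩
      push_cast
      rw [hab]  -- (p^2 * m : ℤ)...
      ring
    · obtain ⟨m, rfl⟩ := hpn
      have hm0 : 0 < m := by
        rcases Nat.eq_zero_or_pos m with rfl | h
        · simp at hn
        · exact h
      have hmlt : m < p * m := lt_mul_of_one_lt_left hm0 hp.one_lt
      have Hm : ∀ q : ℕ, q.Prime → q % 3 = 2 → Even (m.factorization q) := by
        intro q hq hq2
        have hfac : (p*m).factorization q = p.factorization q + m.factorization q := by
          rw [Nat.factorization_mul hp.pos.ne' hm0.ne']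
          simp
        have := H q hq hq2
        have hqp : q ≠ p := fun h => h2 (h ▸ hq2)
        rw [hfac, hp.factorization] at this
        simpa [Finsupp.single_apply, hqp.symm] using this
      have hrecm := ih m hmlt hm0 Hm
      have hmul := loeschian_mul (prime_loeschian hp h2) hrecm
      obtain ⟨x, y, hxy⟩ := hmul
      exact ⟨x, y, by push_cast; rw [← hxy]⟩

theorem loeschian_iff_prime_factorization (n : ℕ) (hn : 0 < n) :
    (∃ a b : ℤ, (n : ℤ) = a ^ 2 + a * b + b ^ 2) ↔
      ∀ p : ℕ, p.Prime → p % 3 = 2 → Even (n.factorization p) := by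
  constructor
  · rintro ⟨a, b, hab⟩ p hp h2
    exact even_factorization_of_loeschian n hn a b hab p hp h2
  · intro H
    exact loeschian_of_even n hn H
end

section
/- The lattices Λ1 = Λ(1, g²) and Λ2 = Λ(g, g³), where g = e^{2πi/12}, intersect only at 0. -/
open Complex

theorem lattices_intersect_trivially (z : ℂ)
    (h1 : ∃ a b : ℤ, z = (a : ℂ) + (b : ℂ) * Complex.exp (2 * Real.pi * Complex.I / 12) ^ 2)
    (h2 : ∃ c d : ℤ, z = (c : ℂ) * Complex.exp (2 * Real.pi * Complex.I / 12)
        + (d : ℂ) * Complex.exp (2 * Real.pi * Complex.I / 12) ^ 3) :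
    z = 0 := by
  obtain ⟨a, b, hab⟩ := h1
  obtain ⟨c, d, hcd⟩ := h2
  have harg : (2 * Real.pi * Complex.I / 12 : ℂ) = (↑(Real.pi / 6) : ℝ) * Complex.I := by
    push_cast; ring
  have hg : Complex.exp (2 * Real.pi * Complex.I / 12)
      = (↑(Real.sqrt 3 / 2) : ℂ) + (↑(1/2 : ℝ) : ℂ) * Complex.I := by
    rw [harg, Complex.exp_mul_I, ← Complex.ofReal_cos, ← Complex.ofReal_sin,
      Real.cos_pi_div_six, Real.sin_pi_div_six]
  have hs3 : ((Real.sqrt 3 : ℂ)) ^ 2 = 3 := by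
    rw [← Complex.ofReal_pow, Real.sq_sqrt (by norm_num : (3:ℝ) ≥ 0)]
    norm_num
  have hg2 : Complex.exp (2 * Real.pi * Complex.I / 12) ^ 2
      = (↑(1/2 : ℝ) : ℂ) + (↑(Real.sqrt 3 / 2) : ℝ) * Complex.I := by
    rw [hg]
    push_cast
    linear_combination (1/4 : ℂ) * hs3 + (1/4 : ℂ) * Complex.I_sq
  have hg3 : Complex.exp (2 * Real.pi * Complex.I / 12) ^ 3 = Complex.I := by
    rw [hg]
    push_cast
    linear_combination ((Real.sqrt 3 : ℂ)/8 + 3*Complex.I/8) * hs3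
      + (3*(Real.sqrt 3 : ℂ)/8 + Complex.I/8) * Complex.I_sq
  have heq : ((a : ℂ) + (b : ℂ) * Complex.exp (2 * Real.pi * Complex.I / 12) ^ 2 : ℂ)
      = (c : ℂ) * Complex.exp (2 * Real.pi * Complex.I / 12)
        + (d : ℂ) * Complex.exp (2 * Real.pi * Complex.I / 12) ^ 3 := by
    rw [← hab, ← hcd]
  rw [hg2, hg3, hg] at heq
  rw [Complex.ext_iff] at heq
  simp at heq
  obtain ⟨hre, him⟩ := heq
  have hirr : Irrational (Real.sqrt 3) := by
    have : Nat.Prime 3 := by norm_num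
    exact_mod_cast this.irrational_sqrt
  -- first show b = 0
  have hb : b = 0 := by
    by_contra hb
    have hbR : (b : ℝ) ≠ 0 := Int.cast_ne_zero.mpr hb
    apply hirr
    refine ⟨((c : ℚ) + 2 * d) / b, ?_⟩
    push_cast
    field_simp
    field_simp at him
    linarith [him]
  subst hb
  simp at hre him
  -- him : 0 = c/2 + d  (or similar), so c = -2d
  have hd : d = 0 := by
    by_contra hd
    have hdR : (d : ℝ) ≠ 0 := Int.cast_ne_zero.mpr hd
    apply hirr
    refine ⟨(-(a : ℚ)) / d, ?_⟩
    push_cast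
    -- from hre : a = c * (√3/2), him : c = -2d
    field_simp
    field_simp at hre him
    linear_combination (-(1:ℝ)/2) * hre + (Real.sqrt 3 / 2) * him
  subst hd
  simp at hre him
  subst him
  simp at hre
  have ha : a = 0 := by exact_mod_cast hre
  subst ha
  simpa using hab
end

section
/- The density of an equal circle packing in a triangular torus whose contact graph is a triangle-rhombus strip tiling equals δ_Δ · (a+1)(n1² + n1·n2 + n2²)/c, where δ_Δ = π/√12, n = c(a+1) is the number of disks, and n1, n2 come from expressing the strip lattice in terms of the triangular lattice. -/
/-!
Both `(c, g + a ω + b)` and `(v, ω v)`, with `ω = exp (π i / 3)`, are bases of the torus lattice,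
related by a unimodular integer matrix, so they span parallelograms of equal area:
`c (Im g + a √3 / 2) = (√3 / 2) |v|²`. Taking norms in `c = (n₁ + n₂ ω) v` gives
`c² = (n₁² + n₁ n₂ + n₂²) |v|²`. Eliminating `|v|²` expresses the area through `c` and
`n₁² + n₁ n₂ + n₂²`, and the density formula is then arithmetic.
-/

open Complex ComplexConjugate

theorem Complex.exp_pi_div_three_mul_I :
    exp (Real.pi / 3 * I) = 1 / 2 + (Real.sqrt 3 / 2 : ℝ) * I := by
  rw [show (Real.pi / 3 : ℂ) * I = ((Real.pi / 3 : ℝ) : ℂ) * I by push_cast; ring,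
    exp_mul_I, ← ofReal_cos, ← ofReal_sin, Real.cos_pi_div_three, Real.sin_pi_div_three]
  push_cast; ring

theorem Complex.exp_pi_div_three_mul_I_im : (exp (Real.pi / 3 * I)).im = Real.sqrt 3 / 2 := by
  rw [exp_pi_div_three_mul_I]; simp

theorem Complex.normSq_add_mul_exp_pi_div_three_mul_I (m k : ℝ) :
    normSq (m + k * exp (Real.pi / 3 * I)) = m ^ 2 + m * k + k ^ 2 := by
  have hs : Real.sqrt 3 ^ 2 = 3 := Real.sq_sqrt (by norm_num)
  rw [exp_pi_div_three_mul_I, normSq_apply]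
  simp
  linear_combination (k ^ 2 / 4) * hs

/-- `Im (conj x * y)` is the oriented area of the parallelogram spanned by `x` and `y`; it scales by
the determinant under a change of basis. -/
theorem Complex.im_conj_mul_of_basis_change (α v : ℂ) (p q r s : ℝ) :
    (conj ((p + q * α) * v) * ((r + s * α) * v)).im = (p * s - q * r) * α.im * normSq v := by
  simp [normSq_apply]
  ring

theorem strip_packing_density_formula_general
    (c a : ℕ) (hc : 0 < c) (b : ℤ) (n1 n2 n3 n4 : ℤ)
    (hdet : n1 * n4 - n2 * n3 = 1)
    (v g : ℂ)
    (hgen1 : (c : ℂ) = ((n1 : ℂ) + (n2 : ℂ) * Complex.exp (Real.pi / 3 * Complex.I)) * v)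
    (hgen2 : g + (a : ℂ) * Complex.exp (Real.pi / 3 * Complex.I) + (b : ℂ)
        = ((n3 : ℂ) + (n4 : ℂ) * Complex.exp (Real.pi / 3 * Complex.I)) * v)
    (n : ℕ) (hn : n = c * (a + 1)) :
    (n : ℝ) * Real.pi * (1 / 2) ^ 2 / ((g.im + (a : ℝ) * (Real.sqrt 3 / 2)) * c)
      = (Real.pi / Real.sqrt 12) *
          ((a + 1 : ℝ) * ((n1 ^ 2 + n1 * n2 + n2 ^ 2 : ℤ) : ℝ) / c) := by
  set N : ℝ := ((n1 ^ 2 + n1 * n2 + n2 ^ 2 : ℤ) : ℝ)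
  have harea : (c : ℝ) * (g.im + a * (Real.sqrt 3 / 2)) = Real.sqrt 3 / 2 * normSq v := by
    have h := im_conj_mul_of_basis_change (exp (Real.pi / 3 * I)) v n1 n2 n3 n4
    have hdet' : (n1 : ℝ) * n4 - n2 * n3 = 1 := by exact_mod_cast hdet
    simpa [← hgen1, ← hgen2, hdet', exp_pi_div_three_mul_I_im] using h
  have hnorm : (c : ℝ) ^ 2 = N * normSq v := by
    have h := congrArg normSq hgen1
    rw [normSq_mul, ← ofReal_intCast, ← ofReal_intCast, normSq_add_mul_exp_pi_div_three_mul_I,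
      normSq_natCast] at h
    rw [sq, h]; push_cast [N]; ring
  have hc' : (c : ℝ) ≠ 0 := by positivity
  have hN : N ≠ 0 := fun h => by simp [h, hc'] at hnorm
  have hv : normSq v ≠ 0 := fun h => by simp [h, hc'] at hnorm
  have h12 : Real.sqrt 12 = 2 * Real.sqrt 3 := by
    rw [show (12 : ℝ) = 2 ^ 2 * 3 by norm_num, Real.sqrt_mul (by positivity),
      Real.sqrt_sq (by norm_num)]
  rw [hn, h12, mul_comm _ (c : ℝ), harea]
  field_simp
  push_cast
  linear_combination (a + 1 : ℝ) * hnorm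

theorem strip_packing_density_formula
    (c a : ℕ) (hc : 0 < c) (b : ℤ) (n1 n2 n3 n4 : ℤ)
    (hdet : n1 * n4 - n2 * n3 = 1)
    (v g : ℂ) (hg_unit : ‖g‖ = 1) (hg_im : 0 < g.im)
    (hgen1 : (c : ℂ) = ((n1 : ℂ) + (n2 : ℂ) * Complex.exp (Real.pi / 3 * Complex.I)) * v)
    (hgen2 : g + (a : ℂ) * Complex.exp (Real.pi / 3 * Complex.I) + (b : ℂ)
        = ((n3 : ℂ) + (n4 : ℂ) * Complex.exp (Real.pi / 3 * Complex.I)) * v)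
    (n : ℕ) (hn : n = c * (a + 1)) :
    (n : ℝ) * Real.pi * (1 / 2) ^ 2 / ((g.im + (a : ℝ) * (Real.sqrt 3 / 2)) * c)
      = (Real.pi / Real.sqrt 12) *
          ((a + 1 : ℝ) * ((n1 ^ 2 + n1 * n2 + n2 ^ 2 : ℤ) : ℝ) / c) :=
  strip_packing_density_formula_general c a hc b n1 n2 n3 n4 hdet v g hgen1 hgen2 n hn
end

section
/- With the setup of a triangle-rhombus strip packing in a triangular torus, Im(g) + a·√3/2 = (c/(n1² + n1·n2 + n2²))·(√3/2). -/
/-!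
Write `ω = e^{iπ/3}` and `w = n1 + n2 ω`, `u = n3 + n4 ω`. Multiplying `z = u v` by `|w|² = w w̄`
and using `c = w v` gives `z |w|² = c u w̄`, and `Im (u w̄) = (n1 n4 - n2 n3) Im ω = Im ω` since the
basis change is unimodular. As `|w|² = n1² + n1 n2 + n2²` and `Im ω = √3 / 2`, taking imaginary
parts of `z = g + a ω + b` gives the height.
-/

open Complex ComplexConjugate

local notation "ω" => Complex.exp (Real.pi / 3 * Complex.I)

namespace Complex

theorem exp_pi_div_three_mul_I_re : (ω).re = 1 / 2 := by
  rw [← ofReal_ofNat, ← ofReal_div, exp_ofReal_mul_I_re, Real.cos_pi_div_three]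

theorem exp_pi_div_three_mul_I_im_s16 : (ω).im = Real.sqrt 3 / 2 := by
  rw [← ofReal_ofNat, ← ofReal_div, exp_ofReal_mul_I_im, Real.sin_pi_div_three]

theorem normSq_add_mul_exp_pi_div_three_mul_I_s16 (p q : ℝ) :
    normSq (p + q * ω) = p ^ 2 + p * q + q ^ 2 := by
  rw [normSq_apply]
  simp only [add_re, add_im, ofReal_re, ofReal_im, re_ofReal_mul, im_ofReal_mul,
    exp_pi_div_three_mul_I_re, exp_pi_div_three_mul_I_im_s16]
  linear_combination (q ^ 2 / 4) * Real.sq_sqrt (show (0 : ℝ) ≤ 3 by norm_num)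

theorem im_mul_conj_add_mul (ζ : ℂ) (p q r t : ℝ) :
    ((r + t * ζ) * conj (p + q * ζ)).im = (p * t - q * r) * ζ.im := by
  simp only [mul_im, mul_re, add_re, add_im, conj_re, conj_im, ofReal_re, ofReal_im, map_add,
    map_mul, conj_ofReal]
  ring

theorem im_mul_normSq_of_eq_mul {c : ℝ} {u v w z : ℂ} (hc : (c : ℂ) = w * v) (hz : z = u * v) :
    z.im * normSq w = c * (u * conj w).im := by
  have h : z * normSq w = c * (u * conj w) := by
    rw [hz, hc, ← mul_conj]
    ring
  simpa only [im_mul_ofReal, im_ofReal_mul] using congrArg im h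

end Complex

theorem strip_packing_torus_height_general
    (c : ℝ) (a : ℕ) (b : ℤ) (n1 n2 n3 n4 : ℤ)
    (hdet : n1 * n4 - n2 * n3 = 1)
    (v g : ℂ)
    (hgen1 : (c : ℂ) = ((n1 : ℂ) + (n2 : ℂ) * Complex.exp (Real.pi / 3 * Complex.I)) * v)
    (hgen2 : g + (a : ℂ) * Complex.exp (Real.pi / 3 * Complex.I) + (b : ℂ)
        = ((n3 : ℂ) + (n4 : ℂ) * Complex.exp (Real.pi / 3 * Complex.I)) * v) :
    g.im + (a : ℝ) * (Real.sqrt 3 / 2)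
      = (c / ((n1 ^ 2 + n1 * n2 + n2 ^ 2 : ℤ) : ℝ)) * (Real.sqrt 3 / 2) := by
  have hdetR : (n1 : ℝ) * n4 - n2 * n3 = 1 := by exact_mod_cast hdet
  have him_u : (((n3 : ℂ) + n4 * ω) * conj (n1 + n2 * ω)).im = Real.sqrt 3 / 2 := by
    simpa [hdetR, exp_pi_div_three_mul_I_im_s16] using im_mul_conj_add_mul ω n1 n2 n3 n4
  have hw : (n1 : ℂ) + n2 * ω ≠ 0 := by
    rintro hw
    simp only [hw, map_zero, mul_zero, zero_im] at him_u
    exact (show 0 < Real.sqrt 3 / 2 by positivity).ne him_u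
  have hnormSq : normSq ((n1 : ℂ) + n2 * ω) = ((n1 ^ 2 + n1 * n2 + n2 ^ 2 : ℤ) : ℝ) := by
    simpa using normSq_add_mul_exp_pi_div_three_mul_I_s16 n1 n2
  have him_z : (g + a * ω + b).im = g.im + a * (Real.sqrt 3 / 2) := by
    simp [exp_pi_div_three_mul_I_im_s16]
  have hz := im_mul_normSq_of_eq_mul hgen1 hgen2
  rw [him_u, him_z, hnormSq] at hz
  rw [div_mul_eq_mul_div, eq_div_iff (hnormSq ▸ (normSq_pos.2 hw).ne')]
  exact hz

theorem strip_packing_torus_height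
    (c : ℝ) (hc : 0 < c) (a : ℕ) (b : ℤ) (n1 n2 n3 n4 : ℤ)
    (hdet : n1 * n4 - n2 * n3 = 1)
    (v g : ℂ) (hg_unit : ‖g‖ = 1) (hg_im : 0 < g.im)
    (hgen1 : (c : ℂ) = ((n1 : ℂ) + (n2 : ℂ) * Complex.exp (Real.pi / 3 * Complex.I)) * v)
    (hgen2 : g + (a : ℂ) * Complex.exp (Real.pi / 3 * Complex.I) + (b : ℂ)
        = ((n3 : ℂ) + (n4 : ℂ) * Complex.exp (Real.pi / 3 * Complex.I)) * v) :
    g.im + (a : ℝ) * (Real.sqrt 3 / 2)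
      = (c / ((n1 ^ 2 + n1 * n2 + n2 ^ 2 : ℤ) : ℝ)) * (Real.sqrt 3 / 2) :=
  strip_packing_torus_height_general c a b n1 n2 n3 n4 hdet v g hgen1 hgen2
end

section
/- For a square torus tiled edge-to-edge by unit squares and unit equilateral triangles, if one side of the period square equals a + b√3 for positive integers a, b, then the number of triangles is f3 = 8ab, the number of squares is f4 = a² + 3b², and the ratio satisfies f4/f3 = (a² + 3b²)/(8ab) ≥ √3/4, with equality impossible for integers a, b (strict inequality holds). -/
theorem square_torus_triangle_square_counts (a b : ℕ) (ha : 0 < a) (hb : 0 < b)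
    (f3 f4 : ℕ)
    (harea : ((a : ℝ) + (b : ℝ) * Real.sqrt 3) ^ 2
        = (f4 : ℝ) + (Real.sqrt 3 / 4) * (f3 : ℝ)) :
    f3 = 8 * a * b ∧ f4 = a ^ 2 + 3 * b ^ 2 ∧
    (f4 : ℝ) / (f3 : ℝ) > Real.sqrt 3 / 4 := by
  have h3 : Irrational (Real.sqrt 3) := by
    have := (Nat.prime_three).irrational_sqrt
    simpa using this
  have sq3 : Real.sqrt 3 * Real.sqrt 3 = 3 := Real.mul_self_sqrt (by norm_num)
  have hkey : Real.sqrt 3 * ((f3 : ℝ) - 8 * a * b)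
      = 4 * (a : ℝ) ^ 2 + 12 * (b : ℝ) ^ 2 - 4 * (f4 : ℝ) := by
    linear_combination (-4 : ℝ) * harea + 4 * (b : ℝ) ^ 2 * sq3
  have hf3 : f3 = 8 * a * b := by
    by_contra hne
    have hne' : (f3 : ℝ) - 8 * a * b ≠ 0 := by
      intro h
      apply hne
      have : (f3 : ℝ) = ((8 * a * b : ℕ) : ℝ) := by push_cast; linarith
      exact_mod_cast this
    set q : ℚ := (4 * (a : ℚ) ^ 2 + 12 * (b : ℚ) ^ 2 - 4 * (f4 : ℚ)) /
        ((f3 : ℚ) - 8 * a * b) with hq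
    have hqc : ((f3 : ℚ) - 8 * a * b) ≠ 0 := by
      intro h
      apply hne'
      have : (((f3 : ℚ) - 8 * a * b : ℚ) : ℝ) = 0 := by rw [h]; norm_num
      push_cast at this
      linarith
    have hqr : (q : ℝ) = Real.sqrt 3 := by
      rw [hq]
      push_cast
      rw [div_eq_iff hne']
      linarith [hkey]
    exact h3 ⟨q, hqr⟩
  have hf4 : f4 = a ^ 2 + 3 * b ^ 2 := by
    have hz : (f3 : ℝ) - 8 * a * b = 0 := by
      rw [hf3]; push_cast; ring
    rw [hz, mul_zero] at hkey
    have : (f4 : ℝ) = ((a ^ 2 + 3 * b ^ 2 : ℕ) : ℝ) := by push_cast; linarith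
    exact_mod_cast this
  refine ⟨hf3, hf4, ?_⟩
  have hane : (a : ℝ) - (b : ℝ) * Real.sqrt 3 ≠ 0 := by
    intro h
    have hb' : (b : ℝ) ≠ 0 := by positivity
    have : ((a / b : ℚ) : ℝ) = Real.sqrt 3 := by
      push_cast
      rw [div_eq_iff hb']
      linarith
    exact h3 ⟨_, this⟩
  have hsq : 0 < ((a : ℝ) - (b : ℝ) * Real.sqrt 3) ^ 2 := by positivity
  have hpos : (0 : ℝ) < (f3 : ℝ) := by
    rw [hf3]; push_cast; positivity
  rw [gt_iff_lt, div_lt_div_iff₀ (by norm_num) hpos, hf3, hf4]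
  push_cast
  nlinarith [hsq, sq3]
end
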